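/- arXiv:math/0502249 — 5 statements merged into one kernel-verified Lean document; each statement's English description precedes it below -/
import Mathlib

section
/- Let X ⊆ ℝ² be the comb-like space X = ({0} ∪ {1/n : n ∈ ℕ, n ≥ 1}) × [0,1] ∪ [0,1] × {0} ∪ [0,1] × {1}, with basepoint p = (0,0). Then the path component of the constant loop in the loop space C_p(X) (with the uniform convergence topology) is not open in C_p(X). -/
open Topology Filter unitInterval

instance ZerothHomotopy.instTopologicalSpace' (X : Type*) [TopologicalSpace X] :
    TopologicalSpace (ZerothHomotopy X) :=
  inferInstanceAs (TopologicalSpace (Quotient _))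

/-- `X` is semilocally simply connected at `p`: some open neighborhood `U` of `p` is such
that every loop at `p` contained in `U` is null-homotopic (rel endpoints) in `X`. -/
def SemilocallySimplyConnectedAt (X : Type*) [TopologicalSpace X] (p : X) : Prop :=
  ∃ U : Set X, IsOpen U ∧ p ∈ U ∧
    ∀ γ : Path p p, (∀ t, γ t ∈ U) → γ.Homotopic (Path.refl p)

/-- The comb-like space of the paper. -/
def comb : Set (ℝ × ℝ) :=
  (({0} ∪ {x : ℝ | ∃ n : ℕ, 1 ≤ n ∧ x = 1 / n}) ×ˢ Set.Icc 0 1) ∪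
    (Set.Icc 0 1 ×ˢ ({0} : Set ℝ)) ∪ (Set.Icc 0 1 ×ˢ ({1} : Set ℝ))

lemma combP_mem : ((0 : ℝ), (0 : ℝ)) ∈ comb :=
  Or.inl (Or.inr ⟨⟨le_refl _, zero_le_one⟩, rfl⟩)

/-- The basepoint `p = (0,0)` of the comb space. -/
def combP : comb := ⟨(0, 0), combP_mem⟩

/-!
For a tooth `b > 0` of the comb, the loop around the rectangle `[0, b] × [0, 1]` is not
null-homotopic: a map to the circle winding once around the gap between `b` and the next tooth
sends it to a loop whose lift to `ℝ` climbs by `1`, while lifts of homotopic loops have the same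
endpoints. As `b = 1 / (k + 1) → 0` these loops converge uniformly to the loop running up and down
the segment `{0} × [0, 1]`, which is null-homotopic. So every neighbourhood of a null-homotopic
loop contains loops that are not null-homotopic.
-/

theorem Path.Homotopic.of_joined {X : Type*} [TopologicalSpace X] {x y : X} {γ₀ γ₁ : Path x y}
    (h : Joined γ₀ γ₁) : γ₀.Homotopic γ₁ := by
  obtain ⟨P⟩ := h
  exact ⟨{ toFun := fun st => P st.1 st.2
           continuous_toFun := Path.continuous_uncurry_iff.mpr P.continuous
           map_zero_left := by simp
           map_one_left := by simp
           prop' := by rintro s t (rfl | rfl) <;> simp }⟩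

theorem IsCoveringMap.not_homotopic_refl_of_lift {E X : Type*} [TopologicalSpace E]
    [TopologicalSpace X] {p : E → X} (cov : IsCoveringMap p) {x : X} (γ : Path x x)
    (Γ : C(I, E)) (hΓ : p ∘ Γ = γ) (hne : Γ 0 ≠ Γ 1) : ¬ γ.Homotopic (Path.refl x) := by
  intro h
  have hx : x = p (Γ 0) := by rw [← γ.source]; exact congrFun hΓ.symm 0
  have hlift : Γ = cov.liftPath γ.toContinuousMap (Γ 0) (by simpa using hx) :=
    (cov.eq_liftPath_iff' ..).mpr ⟨hΓ, rfl⟩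
  have hconst : ContinuousMap.const I (Γ 0) = cov.liftPath (Path.refl x).toContinuousMap (Γ 0)
      (by simpa using hx) :=
    (cov.eq_liftPath_iff' ..).mpr ⟨funext fun _ => hx.symm, rfl⟩
  apply hne
  have := cov.liftPath_apply_one_eq_of_homotopicRel h (Γ 0) (by simpa using hx) (by simpa using hx)
  rw [← hlift, ← hconst] at this
  exact this.symm

open Set

noncomputable section

namespace Comb

variable {a b : ℝ}

def teeth : Set ℝ := {0} ∪ {x : ℝ | ∃ n : ℕ, 1 ≤ n ∧ x = 1 / n}

lemma zero_mem_teeth : (0 : ℝ) ∈ teeth := Or.inl rfl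

lemma one_div_succ_mem_teeth (k : ℕ) : 1 / ((k : ℝ) + 1) ∈ teeth :=
  Or.inr ⟨k + 1, by omega, by push_cast; rfl⟩

lemma teeth_subset_Icc : teeth ⊆ Icc 0 1 := by
  rintro x (rfl | ⟨n, hn, rfl⟩)
  · exact ⟨le_rfl, zero_le_one⟩
  · have : (1 : ℝ) ≤ n := by exact_mod_cast hn
    exact ⟨by positivity, div_le_one_of_le₀ this (by positivity)⟩

lemma le_of_mem_teeth_of_lt {k : ℕ} {x : ℝ} (hx : x ∈ teeth) (hlt : x < 1 / ((k : ℝ) + 1)) :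
    x ≤ 1 / ((k : ℝ) + 2) := by
  rcases hx with rfl | ⟨n, hn, rfl⟩
  · positivity
  · have hkn : (k : ℝ) + 1 < n := (one_div_lt_one_div (by positivity) (by positivity)).mp hlt
    have hkn' : k + 2 ≤ n := by exact_mod_cast hkn
    exact one_div_le_one_div_of_le (by positivity) (by exact_mod_cast hkn')

lemma mk_mem_comb_of_mem_teeth {x y : ℝ} (hx : x ∈ teeth) (hy : y ∈ Icc (0 : ℝ) 1) :
    (x, y) ∈ comb :=
  Or.inl (Or.inl ⟨hx, hy⟩)

lemma mk_zero_mem_comb {x : ℝ} (hx : x ∈ Icc (0 : ℝ) 1) : (x, (0 : ℝ)) ∈ comb :=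
  Or.inl (Or.inr ⟨hx, rfl⟩)

lemma mk_one_mem_comb {x : ℝ} (hx : x ∈ Icc (0 : ℝ) 1) : (x, (1 : ℝ)) ∈ comb :=
  Or.inr ⟨hx, rfl⟩

/-- `t ↦ (boundaryX t, boundaryY t)` runs once around the boundary of the unit square,
`(0, 0) → (1, 0) → (1, 1) → (0, 1) → (0, 0)`, one side per quarter of `[0, 1]`. -/
def boundaryX (t : ℝ) : ℝ := max 0 (min (min (4 * t) (3 - 4 * t)) 1)

def boundaryY (t : ℝ) : ℝ := max 0 (min (min (4 * t - 1) (4 - 4 * t)) 1)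

lemma continuous_boundaryX : Continuous boundaryX := by unfold boundaryX; fun_prop

lemma continuous_boundaryY : Continuous boundaryY := by unfold boundaryY; fun_prop

lemma boundaryX_mem_Icc (t : ℝ) : boundaryX t ∈ Icc (0 : ℝ) 1 :=
  ⟨le_max_left _ _, max_le zero_le_one (min_le_right _ _)⟩

lemma boundaryY_mem_Icc (t : ℝ) : boundaryY t ∈ Icc (0 : ℝ) 1 :=
  ⟨le_max_left _ _, max_le zero_le_one (min_le_right _ _)⟩

lemma boundaryX_zero : boundaryX 0 = 0 := by norm_num [boundaryX]
lemma boundaryY_zero : boundaryY 0 = 0 := by norm_num [boundaryY]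
lemma boundaryX_one : boundaryX 1 = 0 := by norm_num [boundaryX]
lemma boundaryY_one : boundaryY 1 = 0 := by norm_num [boundaryY]
lemma boundaryX_half : boundaryX (1 / 2) = 1 := by norm_num [boundaryX]
lemma boundaryY_half : boundaryY (1 / 2) = 1 := by norm_num [boundaryY]

lemma boundaryY_eq_zero_or_boundaryX_eq_one {t : ℝ} (ht : t ≤ 1 / 2) :
    boundaryY t = 0 ∨ boundaryX t = 1 := by
  unfold boundaryX boundaryY
  rcases le_total t (1 / 4) with h | h
  · left; simp only [max_eq_left_iff]
    exact (min_le_left _ _).trans ((min_le_left _ _).trans (by linarith))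
  · right; rw [min_eq_right (le_min (by linarith) (by linarith))]; exact max_eq_right zero_le_one

lemma boundaryY_eq_one_or_boundaryX_eq_zero {t : ℝ} (ht : 1 / 2 ≤ t) :
    boundaryY t = 1 ∨ boundaryX t = 0 := by
  unfold boundaryX boundaryY
  rcases le_total t (3 / 4) with h | h
  · left; rw [min_eq_right (le_min (by linarith) (by linarith))]; exact max_eq_right zero_le_one
  · right; simp only [max_eq_left_iff]
    exact (min_le_left _ _).trans ((min_le_right _ _).trans (by linarith))

lemma boundaryY_pos {t : ℝ} (h₀ : 1 / 2 < t) (h₁ : t < 1) : 0 < boundaryY t :=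
  lt_max_of_lt_right (lt_min (lt_min (by linarith) (by linarith)) zero_lt_one)

lemma boundaryX_lt_one {t : ℝ} (h₀ : 1 / 2 < t) : boundaryX t < 1 :=
  max_lt zero_lt_one ((min_le_left _ _).trans_lt ((min_le_right _ _).trans_lt (by linarith)))

lemma boundary_mem_comb {r : ℝ} (hr : r ∈ teeth) (t : I) :
    (r * boundaryX t, boundaryY t) ∈ comb := by
  have hr' := teeth_subset_Icc hr
  have hx : r * boundaryX t ∈ Icc (0 : ℝ) 1 :=
    ⟨mul_nonneg hr'.1 (boundaryX_mem_Icc t).1,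
      mul_le_one₀ hr'.2 (boundaryX_mem_Icc t).1 (boundaryX_mem_Icc t).2⟩
  rcases le_total (t : ℝ) (1 / 2) with ht | ht
  · rcases boundaryY_eq_zero_or_boundaryX_eq_one ht with hy | hx1
    · rw [hy]; exact mk_zero_mem_comb hx
    · rw [hx1, mul_one]; exact mk_mem_comb_of_mem_teeth hr (boundaryY_mem_Icc t)
  · rcases boundaryY_eq_one_or_boundaryX_eq_zero ht with hy | hx0
    · rw [hy]; exact mk_one_mem_comb hx
    · rw [hx0, mul_zero]; exact mk_mem_comb_of_mem_teeth zero_mem_teeth (boundaryY_mem_Icc t)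

def rectangleLoop (r : teeth) : Path combP combP where
  toFun t := ⟨(r * boundaryX t, boundaryY t), boundary_mem_comb r.2 t⟩
  continuous_toFun := by
    apply Continuous.subtype_mk
    exact (continuous_const.mul (continuous_boundaryX.comp continuous_subtype_val)).prodMk
      (continuous_boundaryY.comp continuous_subtype_val)
  source' := by ext <;> simp [boundaryX_zero, boundaryY_zero, combP]
  target' := by ext <;> simp [boundaryX_one, boundaryY_one, combP]

lemma continuous_rectangleLoop : Continuous rectangleLoop := by
  rw [← Path.continuous_uncurry_iff]
  apply Continuous.subtype_mk
  exact ((continuous_subtype_val.comp continuous_fst).mul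
    (continuous_boundaryX.comp (continuous_subtype_val.comp continuous_snd))).prodMk
    (continuous_boundaryY.comp (continuous_subtype_val.comp continuous_snd))

lemma tendsto_rectangleLoop :
    Tendsto (fun k : ℕ => rectangleLoop ⟨1 / ((k : ℝ) + 1), one_div_succ_mem_teeth k⟩) atTop
      (𝓝 (rectangleLoop ⟨0, zero_mem_teeth⟩)) :=
  (continuous_rectangleLoop.tendsto _).comp
    (tendsto_subtype_rng.mpr tendsto_one_div_add_atTop_nhds_zero_nat)

lemma rectangleLoop_zero_mem_pathComponent :
    rectangleLoop ⟨0, zero_mem_teeth⟩ ∈ pathComponent (Path.refl combP) := by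
  have hmem (s t : I) : ((0 : ℝ), s * boundaryY t) ∈ comb :=
    mk_mem_comb_of_mem_teeth zero_mem_teeth
      ⟨mul_nonneg s.2.1 (boundaryY_mem_Icc t).1,
        mul_le_one₀ s.2.2 (boundaryY_mem_Icc t).1 (boundaryY_mem_Icc t).2⟩
  let shrink (s : I) : Path combP combP :=
    { toFun t := ⟨(0, s * boundaryY t), hmem s t⟩
      continuous_toFun := by
        apply Continuous.subtype_mk
        exact continuous_const.prodMk
          (continuous_const.mul (continuous_boundaryY.comp continuous_subtype_val))
      source' := by ext <;> simp [boundaryY_zero, combP]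
      target' := by ext <;> simp [boundaryY_one, combP] }
  refine ⟨{ toFun := shrink, continuous_toFun := ?_, source' := ?_, target' := ?_ }⟩
  · rw [← Path.continuous_uncurry_iff]
    apply Continuous.subtype_mk
    exact continuous_const.prodMk ((continuous_subtype_val.comp continuous_fst).mul
      (continuous_boundaryY.comp (continuous_subtype_val.comp continuous_snd)))
  · ext t <;> simp [shrink] <;> rfl
  · ext t <;> simp [shrink, rectangleLoop]

def ramp (a b x : ℝ) : ℝ := max 0 (min ((x - a) / (b - a)) 1)

lemma continuous_ramp : Continuous (ramp a b) := by unfold ramp; fun_prop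

lemma ramp_of_le (hab : a < b) {x : ℝ} (hx : x ≤ a) : ramp a b x = 0 :=
  max_eq_left <| (min_le_left _ _).trans (div_nonpos_of_nonpos_of_nonneg (by linarith) (by linarith))

lemma ramp_of_ge (hab : a < b) {x : ℝ} (hx : b ≤ x) : ramp a b x = 1 := by
  rw [ramp, min_eq_right ((one_le_div (by linarith)).mpr (by linarith)), max_eq_right zero_le_one]

def height (a b : ℝ) (q : ℝ × ℝ) : ℝ := ramp a b q.1 + q.2

open scoped Classical in
/-- A map to the circle winding once around the hole `(a, b) × (0, 1)` of the comb: the bottom and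
right part `{y = 0} ∪ {x ≥ b}` is sent to `height / 4 ∈ [0, 1/2]`, the rest, which lies in the
top and left part `{y = 1} ∪ {x ≤ a}`, to `1 - height / 4 ∈ [1/2, 1]`. -/
def windingFun (a b : ℝ) (q : comb) : AddCircle (1 : ℝ) :=
  if q.1.2 = 0 ∨ b ≤ q.1.1 then ((height a b q / 4 : ℝ) : AddCircle (1 : ℝ))
  else ((1 - height a b q / 4 : ℝ) : AddCircle (1 : ℝ))

lemma continuous_windingFun (hab : a < b) (hgap : ∀ x ∈ teeth, x < b → x ≤ a) :
    Continuous (windingFun a b) := by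
  classical
  have hx : Continuous fun q : comb => q.1.1 := by fun_prop
  have hy : Continuous fun q : comb => q.1.2 := by fun_prop
  have hh : Continuous fun q : comb => height a b q := continuous_ramp.comp hx |>.add hy
  set S : Set comb := {q | q.1.2 = 0 ∨ b ≤ q.1.1}
  have hS : IsClosed S := (isClosed_eq hy continuous_const).union (isClosed_le continuous_const hx)
  have hT : IsClosed {q : comb | q.1.2 = 1 ∨ q.1.1 ≤ a} :=
    (isClosed_eq hy continuous_const).union (isClosed_le hx continuous_const)
  have hST : Sᶜ ⊆ {q : comb | q.1.2 = 1 ∨ q.1.1 ≤ a} := by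
    rintro ⟨⟨x, y⟩, hq⟩ hnot
    simp only [S, mem_compl_iff, mem_ofPred_eq, not_or, not_le] at hnot
    rcases hq with (⟨htooth, -⟩ | ⟨-, hy0⟩) | ⟨-, hy1⟩
    · exact Or.inr (hgap x htooth hnot.2)
    · exact absurd hy0 hnot.1
    · exact Or.inl hy1
  refine Continuous.if (fun q hq => ?_) (AddCircle.continuous_mk' 1 |>.comp (hh.div_const 4))
    (AddCircle.continuous_mk' 1 |>.comp (continuous_const.sub (hh.div_const 4)))
  rw [frontier_eq_closure_inter_closure] at hq
  have hqS : q ∈ S := hS.closure_subset hq.1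
  have hqT := hT.closure_subset_iff.mpr hST hq.2
  simp only [height]
  rcases hqS with hy0 | hxb <;> rcases hqT with hy1 | hxa
  · exact absurd (hy0.symm.trans hy1) zero_ne_one
  · rw [hy0, ramp_of_le hab hxa]
    norm_num [AddCircle.coe_period]
  · rw [hy1, ramp_of_ge hab hxb]
    norm_num
  · exact absurd (hxb.trans hxa) (not_le.mpr hab)

lemma height_boundary_half (hab : a < b) :
    height a b (b * boundaryX (1 / 2), boundaryY (1 / 2)) = 2 := by
  rw [height, boundaryX_half, boundaryY_half, mul_one, ramp_of_ge hab le_rfl]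
  norm_num

open scoped Classical in
def windingLift (hab : a < b) : C(I, ℝ) where
  toFun t :=
    if (t : ℝ) ≤ 1 / 2 then height a b (b * boundaryX t, boundaryY t) / 4
    else 1 - height a b (b * boundaryX t, boundaryY t) / 4
  continuous_toFun := by
    have hh : Continuous fun t : I => height a b (b * boundaryX t, boundaryY t) :=
      (continuous_ramp.comp (continuous_const.mul (continuous_boundaryX.comp
        continuous_subtype_val))).add (continuous_boundaryY.comp continuous_subtype_val)
    refine Continuous.if_le (hh.div_const 4) (continuous_const.sub (hh.div_const 4))
      continuous_subtype_val continuous_const fun t ht => ?_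
    rw [ht, height_boundary_half hab]
    norm_num

lemma windingLift_zero (ha : 0 ≤ a) (hab : a < b) : windingLift hab 0 = 0 := by
  simp [windingLift, height, boundaryX_zero, boundaryY_zero, ramp_of_le hab ha]

lemma windingLift_one (ha : 0 ≤ a) (hab : a < b) : windingLift hab 1 = 1 := by
  norm_num [windingLift, height, boundaryX_one, boundaryY_one, ramp_of_le hab ha]

lemma windingFun_rectangleLoop (ha : 0 ≤ a) (hab : a < b) (hb : b ∈ teeth) (t : I) :
    windingFun a b (rectangleLoop ⟨b, hb⟩ t) = windingLift hab t := by
  classical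
  simp only [windingFun, rectangleLoop, windingLift, Path.coe_mk', ContinuousMap.coe_mk]
  rcases le_or_gt (t : ℝ) (1 / 2) with ht | ht
  · have hS : boundaryY t = 0 ∨ b ≤ b * boundaryX t := by
      rcases boundaryY_eq_zero_or_boundaryX_eq_one ht with h | h
      · exact Or.inl h
      · exact Or.inr (by rw [h, mul_one])
    simp only [hS, ht, if_true]
  rcases eq_or_lt_of_le t.2.2 with h1 | h1
  · have : t = 1 := Subtype.ext h1
    subst this
    norm_num [height, boundaryX_one, boundaryY_one, ramp_of_le hab ha, AddCircle.coe_period]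
  · have hb0 : 0 < b := ha.trans_lt hab
    have hS : ¬ (boundaryY t = 0 ∨ b ≤ b * boundaryX t) := by
      rintro (h | h)
      · exact (boundaryY_pos ht h1).ne' h
      · exact (boundaryX_lt_one ht).not_ge (le_of_mul_le_mul_left (by rwa [mul_one]) hb0)
    simp only [hS, not_le.mpr ht, if_false]

lemma rectangleLoop_not_homotopic_refl (ha : 0 ≤ a) (hab : a < b) (hb : b ∈ teeth)
    (hgap : ∀ x ∈ teeth, x < b → x ≤ a) :
    ¬ (rectangleLoop ⟨b, hb⟩).Homotopic (Path.refl combP) := fun h =>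
  (AddCircle.isCoveringMap_coe 1).not_homotopic_refl_of_lift
    ((rectangleLoop ⟨b, hb⟩).map (continuous_windingFun hab hgap)) (windingLift hab)
    (funext fun t => (windingFun_rectangleLoop ha hab hb t).symm)
    (by rw [windingLift_zero ha hab, windingLift_one ha hab]; exact zero_ne_one)
    (h.map ⟨windingFun a b, continuous_windingFun hab hgap⟩)

end Comb

end

open Comb in
/-- The path component of the constant loop is not open in the loop space `C_p(X)`. -/
theorem stmt2 : ¬ IsOpen (pathComponent (Path.refl combP)) := by
  intro hopen
  obtain ⟨k, hk⟩ := (tendsto_rectangleLoop.eventually_mem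
    (hopen.mem_nhds rectangleLoop_zero_mem_pathComponent)).exists
  exact rectangleLoop_not_homotopic_refl (a := 1 / ((k : ℝ) + 2)) (by positivity)
    (one_div_lt_one_div_of_lt (by positivity) (by linarith)) _ (fun _ => le_of_mem_teeth_of_lt)
    (Path.Homotopic.of_joined hk).symm
end

section
/- Let X be a path connected metrizable space with basepoint p. If the topological fundamental group π₁(X,p) is discrete, then X is semilocally simply connected (at every point). -/
open Topology Filter unitInterval

/-! Null-homotopic loops at `p` form a path component of the loop space, which is open when
`π₁(X, p)` is discrete. Conjugation by a path `α` from `p` to `x` is continuous and injective on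
homotopy classes, so the null-homotopic loops at `x` form a neighbourhood of the constant loop.
A compact-open neighbourhood of a constant map constrains only the values of the map, so it
contains every loop lying in some open `U ∋ x`. -/

theorem Path.homotopic_of_joined {X : Type*} [TopologicalSpace X] {x₀ x₁ : X}
    {γ δ : Path x₀ x₁} (h : Joined γ δ) : γ.Homotopic δ := by
  obtain ⟨F⟩ := h
  exact ⟨{ toFun := fun st => F st.1 st.2
           continuous_toFun := Path.continuous_uncurry_iff.mpr F.continuous
           map_zero_left := fun t => by simp
           map_one_left := fun t => by simp
           prop' := fun s t ht => by rcases ht with rfl | rfl <;> simp }⟩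

theorem Path.Homotopic.of_trans_trans_symm {X : Type*} [TopologicalSpace X] {x y : X}
    {α : Path x y} {γ δ : Path y y}
    (h : (α.trans (γ.trans α.symm)).Homotopic (α.trans (δ.trans α.symm))) :
    γ.Homotopic δ := by
  rw [← Quotient.eq] at h ⊢
  simp only [Quotient.mk_trans, Quotient.mk_symm] at h
  set a := Quotient.mk α
  have cancel_left (q : Homotopic.Quotient y y) : a.symm.trans (a.trans q) = q := by
    rw [← Quotient.trans_assoc, Quotient.symm_trans, Quotient.refl_trans]
  simpa [cancel_left] using congrArg (fun q => a.symm.trans (q.trans a)) h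

theorem isOpen_setOf_joined {Y : Type*} [TopologicalSpace Y]
    [DiscreteTopology (ZerothHomotopy Y)] (y : Y) : IsOpen {z | Joined y z} := by
  convert (isOpen_discrete {ZerothHomotopy.mk y}).preimage
    ZerothHomotopy.isQuotientMap_mk.continuous using 1
  ext z
  exact ⟨fun h => ZerothHomotopy.sound h.somePath.symm, fun h => (Quotient.exact h).symm⟩

theorem ContinuousMap.exists_isOpen_of_mem_nhds_const {X Y : Type*} [TopologicalSpace X]
    [TopologicalSpace Y] {y : Y} {N : Set C(X, Y)} (hN : N ∈ 𝓝 (ContinuousMap.const X y)) :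
    ∃ U, IsOpen U ∧ y ∈ U ∧ ∀ f : C(X, Y), (∀ t, f t ∈ U) → f ∈ N := by
  have hmono : Monotone fun U : Set Y => {f : C(X, Y) | ∀ t, f t ∈ U} :=
    fun U V hUV f hf t => hUV (hf t)
  have hF : (𝓝 y).lift' (fun U => {f : C(X, Y) | ∀ t, f t ∈ U}) ≤ 𝓝 (const X y) := by
    rw [← tendsto_id', tendsto_nhds_compactOpen]
    intro K _ U hU hyU
    rcases K.eq_empty_or_nonempty with rfl | ⟨t, ht⟩
    · exact Eventually.of_forall fun f => Set.mapsTo_empty f U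
    · exact mem_of_superset (mem_lift' (hU.mem_nhds (hyU ht))) fun f hf s _ => hf s
  obtain ⟨V, hV, hVN⟩ := (mem_lift'_sets hmono).mp (hF hN)
  obtain ⟨U, hUV, hU, hyU⟩ := mem_nhds_iff.mp hV
  exact ⟨U, hU, hyU, fun f hf => hVN (hmono hUV hf)⟩

theorem semilocallySimplyConnectedAt_of_mem_nhds {X : Type*} [TopologicalSpace X] {x : X}
    (h : {γ : Path x x | γ.Homotopic (Path.refl x)} ∈ 𝓝 (Path.refl x)) :
    SemilocallySimplyConnectedAt X x := by
  rw [nhds_induced, mem_comap] at h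
  obtain ⟨N, hN, hNsub⟩ := h
  obtain ⟨U, hU, hxU, hUN⟩ := ContinuousMap.exists_isOpen_of_mem_nhds_const hN
  exact ⟨U, hU, hxU, fun γ hγ => hNsub (hUN γ hγ)⟩

theorem semilocallySimplyConnectedAt_of_joined {X : Type*} [TopologicalSpace X] {p x : X}
    [DiscreteTopology (ZerothHomotopy (Path p p))] (hpx : Joined p x) :
    SemilocallySimplyConnectedAt X x := by
  obtain ⟨α⟩ := hpx
  let conj (γ : Path x x) : Path p p := α.trans (γ.trans α.symm)
  have hconj : Continuous conj := by fun_prop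
  have hnhds : conj ⁻¹' {η | Joined (conj (Path.refl x)) η} ∈ 𝓝 (Path.refl x) :=
    ((isOpen_setOf_joined _).preimage hconj).mem_nhds (Joined.refl _)
  refine semilocallySimplyConnectedAt_of_mem_nhds (mem_of_superset hnhds fun γ hγ => ?_)
  exact (Path.homotopic_of_joined hγ).symm.of_trans_trans_symm

theorem stmt10_general {X : Type*} [TopologicalSpace X]
    [PathConnectedSpace X] (p : X)
    (h : DiscreteTopology (ZerothHomotopy (Path p p))) :
    ∀ x : X, SemilocallySimplyConnectedAt X x :=
  fun x => semilocallySimplyConnectedAt_of_joined (PathConnectedSpace.joined p x)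

theorem stmt10 {X : Type*} [TopologicalSpace X] [TopologicalSpace.MetrizableSpace X]
    [PathConnectedSpace X] (p : X)
    (h : DiscreteTopology (ZerothHomotopy (Path p p))) :
    ∀ x : X, SemilocallySimplyConnectedAt X x :=
  stmt10_general p h
end

section
/- Let X ⊆ ℝ² be the comb-like space X = ({0} ∪ {1/n : n ∈ ℕ, n ≥ 1}) × [0,1] ∪ [0,1] × {0} ∪ [0,1] × {1}, and let Y be the cone over X, i.e., the quotient of X × [0,1] with X × {1} collapsed to a point. Then Y is simply connected (hence has discrete fundamental group), but Y is not locally path connected. -/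
open Topology Filter unitInterval

/-- The setoid on `comb × [0,1]` identifying all points of `comb × {1}`. -/
def coneSetoid : Setoid (↥comb × unitInterval) where
  r a b := a = b ∨ (a.2 = 1 ∧ b.2 = 1)
  iseqv := by
    refine ⟨fun a => Or.inl rfl, ?_, ?_⟩
    · rintro a b (rfl | ⟨h1, h2⟩)
      · exact Or.inl rfl
      · exact Or.inr ⟨h2, h1⟩
    · rintro a b c (rfl | ⟨h1, h2⟩) (rfl | ⟨h3, h4⟩)
      · exact Or.inl rfl
      · exact Or.inr ⟨h3, h4⟩
      · exact Or.inr ⟨h1, h2⟩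
      · exact Or.inr ⟨h1, h4⟩

/-- The cone over the comb space: `(comb × [0,1]) / (comb × {1})`. -/
def ConeComb := Quotient coneSetoid

instance : TopologicalSpace ConeComb :=
  inferInstanceAs (TopologicalSpace (Quotient coneSetoid))

/-!
The cone is contractible: sliding every point `[x, t]` to `[x, max t s]` pushes it to the apex.
Hence it is simply connected, and any two loops, being homotopic, are joined by a path in the
loop space.

A small open neighbourhood `U` of `y₀ = [(0, 1/2), 0]` avoids the apex and the horizontal bars of
the comb, so the first coordinate maps `U` into the countable set `{0} ∪ {1/n}`. Along any path
inside `U` the first coordinate is therefore constant, while the points `[(1/n, 1/2), 0]` on the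
teeth converge to `y₀`: no path connected neighbourhood of `y₀` fits inside `U`.
-/

open Set

theorem Path.Homotopic.joined {X : Type*} [TopologicalSpace X] {x y : X} {p q : Path x y}
    (h : p.Homotopic q) : Joined p q := by
  obtain ⟨F⟩ := h
  exact ⟨{ toFun := F.eval
           continuous_toFun := Path.continuous_uncurry_iff.mp F.continuous
           source' := F.eval_zero
           target' := F.eval_one }⟩

instance SimplyConnectedSpace.subsingleton_zerothHomotopy_path {X : Type*} [TopologicalSpace X]
    [SimplyConnectedSpace X] (x y : X) : Subsingleton (ZerothHomotopy (Path x y)) :=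
  ⟨fun a b => Quotient.inductionOn₂ a b fun p q =>
    Quotient.sound (SimplyConnectedSpace.paths_homotopic p q).joined⟩

theorem LocallyPathConnectedSpace.eventually_eq_of_isTotallyDisconnected_image {X Y : Type*}
    [TopologicalSpace X] [LocallyPathConnectedSpace X] [TopologicalSpace Y] {f : X → Y}
    (hf : Continuous f) {U : Set X} {x : X} (hU : U ∈ 𝓝 x)
    (hfU : IsTotallyDisconnected (f '' U)) : ∀ᶠ y in 𝓝 x, f y = f x := by
  filter_upwards [pathComponentIn_mem_nhds hU] with y hy
  have hC : IsPreconnected (f '' pathComponentIn U x) :=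
    ((isPathConnected_pathComponentIn (mem_of_mem_nhds hU)).isConnected.image f
      hf.continuousOn).isPreconnected
  exact hfU _ (image_mono (pathComponentIn_subset)) hC (mem_image_of_mem f hy)
    (mem_image_of_mem f (mem_pathComponentIn_self (mem_of_mem_nhds hU)))

def combTeeth : Set ℝ := {0} ∪ {x : ℝ | ∃ n : ℕ, 1 ≤ n ∧ x = 1 / n}

theorem zero_mem_combTeeth : 0 ∈ combTeeth := Or.inl rfl

theorem one_div_add_one_mem_combTeeth (n : ℕ) : 1 / ((n : ℝ) + 1) ∈ combTeeth :=
  Or.inr ⟨n + 1, by omega, by push_cast; rfl⟩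

-- `0 = 1 / 0` in `ℝ`, so the tooth at `0` is in the range as well.
theorem combTeeth_countable : combTeeth.Countable := by
  refine (countable_range fun n : ℕ => 1 / (n : ℝ)).mono ?_
  rintro x (rfl | ⟨n, -, rfl⟩)
  exacts [⟨0, by simp⟩, ⟨n, rfl⟩]

theorem fst_nonneg_of_mem_comb {p : ℝ × ℝ} (hp : p ∈ comb) : 0 ≤ p.1 := by
  rcases hp with (⟨h | ⟨n, -, h⟩, -⟩ | ⟨h, -⟩) | ⟨h, -⟩
  · exact le_of_eq (Eq.symm h)
  · rw [h]; positivity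
  exacts [h.1, h.1]

theorem fst_mem_combTeeth_of_mem_comb {p : ℝ × ℝ} (hp : p ∈ comb) (h₀ : p.2 ≠ 0) (h₁ : p.2 ≠ 1) :
    p.1 ∈ combTeeth := by
  rcases hp with (⟨h, -⟩ | ⟨-, h⟩) | ⟨-, h⟩
  exacts [h, absurd h h₀, absurd h h₁]

noncomputable def toothMidpoint {a : ℝ} (ha : a ∈ combTeeth) : comb :=
  ⟨(a, 1 / 2), Or.inl (Or.inl ⟨ha, by norm_num, by norm_num⟩)⟩

namespace ConeComb

def mk (k : comb × I) : ConeComb := Quotient.mk coneSetoid k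

theorem isQuotientMap_mk : IsQuotientMap mk :=
  isQuotientMap_quotient_mk'

theorem continuous_mk : Continuous mk :=
  isQuotientMap_mk.continuous

@[elab_as_elim]
theorem ind {P : ConeComb → Prop} (h : ∀ k, P (mk k)) (z : ConeComb) : P z :=
  Quotient.ind h z

def apex : ConeComb := mk (combP, 1)

theorem mk_one (x : comb) : mk (x, 1) = apex :=
  Quotient.sound (Or.inr ⟨rfl, rfl⟩)

theorem mk_eq_mk_iff {k l : comb × I} (hk : k.2 ≠ 1) : mk k = mk l ↔ k = l :=
  ⟨fun h => (Quotient.exact h).resolve_right fun h => hk h.1, congrArg mk⟩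

def lift {Z : Type*} (f : comb × I → Z) (hf : ∀ x y, f (x, 1) = f (y, 1)) : ConeComb → Z :=
  Quotient.lift f <| by
    rintro ⟨x, s⟩ ⟨y, t⟩ (h | ⟨rfl, rfl⟩)
    exacts [congrArg f h, hf x y]

@[simp]
theorem lift_mk {Z : Type*} (f : comb × I → Z) (hf : ∀ x y, f (x, 1) = f (y, 1)) (k : comb × I) :
    lift f hf (mk k) = f k :=
  rfl

theorem continuous_lift {Z : Type*} [TopologicalSpace Z] {f : comb × I → Z}
    (hf : ∀ x y, f (x, 1) = f (y, 1)) (hc : Continuous f) : Continuous (lift f hf) :=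
  hc.quotient_lift _

def shift (s : I) : ConeComb → ConeComb :=
  lift (fun k => mk (k.1, max k.2 s)) fun x y => by simp only [max_eq_left le_one', mk_one]

def contraction :
    ContinuousMap.Homotopy (ContinuousMap.id ConeComb) (ContinuousMap.const ConeComb apex) where
  toFun p := shift p.1 p.2
  continuous_toFun := isQuotientMap_mk.continuous_lift_prod_right <|
    continuous_mk.comp (by fun_prop : Continuous fun p : I × (comb × I) => (p.2.1, max p.2.2 p.1))
  map_zero_left z := by
    induction z using ind with
    | h k => simp [shift]
  map_one_left z := by
    induction z using ind with
    | h k => simp [shift, max_eq_right le_one', mk_one]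

instance : ContractibleSpace ConeComb :=
  contractible_iff_id_nullhomotopic _ |>.mpr ⟨apex, ⟨contraction⟩⟩

def truncFst : ConeComb → ℝ :=
  lift (fun k => min (k.1 : ℝ × ℝ).1 (1 - k.2)) fun x y => by
    simp only [Icc.coe_one, sub_self, min_eq_right (fst_nonneg_of_mem_comb x.2),
      min_eq_right (fst_nonneg_of_mem_comb y.2)]

theorem continuous_truncFst : Continuous truncFst :=
  continuous_lift _ (by fun_prop)

theorem isOpen_image_mk {S : Set (comb × I)} (hS : IsOpen S) (hS₁ : ∀ k ∈ S, k.2 ≠ 1) :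
    IsOpen (mk '' S) := by
  have hsat : mk ⁻¹' (mk '' S) = S := by
    refine Subset.antisymm (fun l ⟨k, hk, he⟩ => ?_) (subset_preimage_image _ _)
    rwa [← (mk_eq_mk_iff (hS₁ k hk)).mp he]
  rwa [← isQuotientMap_mk.isOpen_preimage, hsat]

def teethBand : Set (comb × I) :=
  {k | (k.2 : ℝ) < 1 / 2 ∧ (k.1 : ℝ × ℝ).1 < 1 / 2 ∧ (k.1 : ℝ × ℝ).2 ∈ Ioo (1 / 4) (3 / 4)}

theorem isOpen_teethBand : IsOpen teethBand := by
  have ht : Continuous fun k : comb × I => (k.2 : ℝ) := by fun_prop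
  have hx : Continuous fun k : comb × I => (k.1 : ℝ × ℝ).1 := by fun_prop
  have hy : Continuous fun k : comb × I => (k.1 : ℝ × ℝ).2 := by fun_prop
  exact (isOpen_lt ht continuous_const).inter <|
    (isOpen_lt hx continuous_const).inter (isOpen_Ioo.preimage hy)

theorem truncFst_image_teethBand_subset : truncFst '' (mk '' teethBand) ⊆ combTeeth := by
  rintro _ ⟨_, ⟨⟨x, t⟩, ⟨ht, hx, hy₀, hy₁⟩, rfl⟩, rfl⟩
  have hxt : (x : ℝ × ℝ).1 ≤ 1 - t := by linarith
  simp only [truncFst, lift_mk, min_eq_left hxt]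
  exact fst_mem_combTeeth_of_mem_comb x.2 (by linarith) (by linarith)

theorem tendsto_mk_toothMidpoint :
    Tendsto (fun n : ℕ => mk (toothMidpoint (one_div_add_one_mem_combTeeth n), 0)) atTop
      (𝓝 (mk (toothMidpoint zero_mem_combTeeth, 0))) := by
  refine (continuous_mk.tendsto _).comp (Tendsto.prodMk_nhds ?_ tendsto_const_nhds)
  exact tendsto_subtype_rng.mpr
    (tendsto_one_div_add_atTop_nhds_zero_nat.prodMk_nhds tendsto_const_nhds)

theorem not_locallyPathConnectedSpace : ¬ LocallyPathConnectedSpace ConeComb := by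
  intro _
  have hU : mk '' teethBand ∈ 𝓝 (mk (toothMidpoint zero_mem_combTeeth, 0)) :=
    (isOpen_image_mk isOpen_teethBand fun k hk =>
      ne_of_apply_ne ((↑) : I → ℝ) (hk.1.trans (by norm_num)).ne).mem_nhds
      ⟨(toothMidpoint zero_mem_combTeeth, 0), by norm_num [teethBand, toothMidpoint], rfl⟩
  have hconst := LocallyPathConnectedSpace.eventually_eq_of_isTotallyDisconnected_image
    continuous_truncFst hU
    (combTeeth_countable.mono truncFst_image_teethBand_subset).isTotallyDisconnected
  obtain ⟨n, hn⟩ := (tendsto_mk_toothMidpoint.eventually hconst).exists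
  norm_num [truncFst, toothMidpoint] at hn
  exact (lt_min (by positivity) one_pos).ne' hn

end ConeComb

theorem stmt11 : SimplyConnectedSpace ConeComb ∧
    (∀ y : ConeComb, DiscreteTopology (ZerothHomotopy (Path y y))) ∧
    ¬ LocPathConnectedSpace ConeComb :=
  ⟨inferInstance, fun _ => inferInstance, ConeComb.not_locallyPathConnectedSpace⟩
end

section
/- The countably infinite product X = S¹ × S¹ × ⋯ of circles has totally disconnected topological fundamental group π₁(X,p) (where p is any basepoint), but X is not semilocally simply connected at p. -/
/-!
A homotopy of loops in `∏ S¹` is the same as a family of homotopies of the coordinate loops, so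
`π₁(∏ S¹)` injects continuously into `∏ π₁(S¹)`. Each `π₁(S¹)` is discrete: two loops in `S¹` at
uniform distance `< 2` are never antipodal, so one can be rotated onto the other along the
shorter arc, which makes every homotopy class open in the loop space. A space that injects
continuously into a product of discrete spaces is totally disconnected.

A basic neighbourhood of the basepoint restricts only finitely many coordinates, so it contains
the standard loop of `S¹` placed in a free coordinate. That loop lifts along `exp : ℝ → S¹` to
a path from `0` to `2π`, while the constant loop lifts to the constant path at `0`; by homotopy
lifting it is not null-homotopic.
-/

open Topology Filter unitInterval

instance ZerothHomotopy.instTopologicalSpaceQuot (X : Type*) [TopologicalSpace X] :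
    TopologicalSpace (ZerothHomotopy X) :=
  inferInstanceAs (TopologicalSpace (Quotient _))

/-- The basepoint `(1,1,1,...)` of the infinite torus `S¹ × S¹ × ⋯`. -/
noncomputable def circleP : ∀ _ : ℕ, Circle := fun _ => 1

theorem Path.joined_iff_homotopic {X : Type*} [TopologicalSpace X] {x y : X}
    {γ δ : Path x y} : Joined γ δ ↔ γ.Homotopic δ := by
  constructor
  · rintro ⟨P⟩
    refine ⟨{ toFun := fun q => P q.1 q.2
              continuous_toFun := Path.continuous_uncurry_iff.2 P.continuous
              map_zero_left := by simp
              map_one_left := by simp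
              prop' := fun t => ?_ }⟩
    rintro z (rfl | rfl) <;> simp
  · rintro ⟨H⟩
    exact ⟨⟨⟨H.eval, Path.continuous_uncurry_iff.1 H.continuous⟩, H.eval_zero, H.eval_one⟩⟩

theorem ZerothHomotopy.mk_eq_mk_iff_homotopic {X : Type*} [TopologicalSpace X] {x y : X}
    {γ δ : Path x y} : ZerothHomotopy.mk γ = .mk δ ↔ γ.Homotopic δ :=
  Quotient.eq.trans Path.joined_iff_homotopic

theorem Path.continuous_map {X Y : Type*} [TopologicalSpace X] [TopologicalSpace Y] {x y : X}
    {f : X → Y} (hf : Continuous f) : Continuous fun γ : Path x y => γ.map hf :=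
  Path.continuous_uncurry_iff.1 (hf.comp continuous_eval)

theorem Path.homotopic_of_forall_homotopic_map_eval {ι : Type*} {X : ι → Type*}
    [∀ i, TopologicalSpace (X i)] {x y : ∀ i, X i} {γ δ : Path x y}
    (h : ∀ i, (γ.map (continuous_apply i)).Homotopic (δ.map (continuous_apply i))) :
    γ.Homotopic δ :=
  let ⟨H⟩ := Classical.nonempty_pi.2 h
  ⟨Path.Homotopic.piHomotopy _ _ H⟩

theorem totallyDisconnectedSpace_of_continuous_injective {X Y : Type*} [TopologicalSpace X]
    [TopologicalSpace Y] [TotallyDisconnectedSpace Y] {f : X → Y} (hf : Continuous f)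
    (hinj : Function.Injective f) : TotallyDisconnectedSpace X :=
  ⟨isTotallyDisconnected_of_image hf.continuousOn hinj
    (isTotallyDisconnected_of_totallyDisconnectedSpace _)⟩

theorem totallyDisconnectedSpace_zerothHomotopy_path_pi {ι : Type*} {X : ι → Type*}
    [∀ i, TopologicalSpace (X i)] {x y : ∀ i, X i}
    [∀ i, TotallyDisconnectedSpace (ZerothHomotopy (Path (x i) (y i)))] :
    TotallyDisconnectedSpace (ZerothHomotopy (Path x y)) := by
  let proj : ZerothHomotopy (Path x y) → ∀ i, ZerothHomotopy (Path (x i) (y i)) :=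
    ZerothHomotopy.lift (fun γ i => .mk (γ.map (continuous_apply i)))
      fun _ _ P => funext fun i => ZerothHomotopy.sound (P.map (Path.continuous_map _))
  refine totallyDisconnectedSpace_of_continuous_injective (f := proj) ?_ ?_
  · refine ZerothHomotopy.isQuotientMap_mk.continuous_iff.2 (continuous_pi fun i => ?_)
    exact ZerothHomotopy.isQuotientMap_mk.continuous.comp (Path.continuous_map _)
  · refine ZerothHomotopy.mk_surjective.forall₂.2 fun γ δ h => ?_
    exact ZerothHomotopy.mk_eq_mk_iff_homotopic.2 (Path.homotopic_of_forall_homotopic_map_eval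
      fun i => ZerothHomotopy.mk_eq_mk_iff_homotopic.1 (congr_fun h i))

theorem discreteTopology_zerothHomotopy_of_pathComponent_mem_nhds {X : Type*}
    [TopologicalSpace X] (h : ∀ x : X, pathComponent x ∈ 𝓝 x) :
    DiscreteTopology (ZerothHomotopy X) := by
  refine discreteTopology_iff_isOpen_singleton.2 <|
    ZerothHomotopy.mk_surjective.forall.2 fun x => ?_
  have hopen : IsOpen (pathComponent x) := isOpen_iff_mem_nhds.2 fun y hy =>
    pathComponent_congr hy ▸ h y
  refine ZerothHomotopy.isQuotientMap_mk.isOpen_preimage.1 ?_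
  convert hopen using 1
  ext y
  exact Quotient.eq.trans ⟨Joined.symm, Joined.symm⟩

theorem Circle.div_mem_slitPlane {z w : Circle} (h : dist z w < 2) :
    ((z / w : Circle) : ℂ) ∈ Complex.slitPlane := by
  refine Complex.mem_slitPlane_iff_arg.2 ⟨fun hπ => h.ne ?_, Circle.coe_ne_zero _⟩
  have hzw : z / w = Circle.exp Real.pi :=
    Circle.arg_eq_arg.1 (hπ.trans (Circle.arg_exp (by linarith [Real.pi_pos]) le_rfl).symm)
  rw [div_eq_iff_eq_mul] at hzw
  subst hzw
  change dist ((Circle.exp Real.pi * w : Circle) : ℂ) w = 2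
  rw [Circle.coe_mul, Circle.coe_exp, Complex.exp_pi_mul_I, dist_eq_norm]
  simp [show -(w : ℂ) - w = -2 * w by ring, Circle.norm_coe]

theorem Circle.path_homotopic_of_dist_lt_two {x y : Circle} {α β : Path x y}
    (h : ∀ t, dist (α t) (β t) < 2) : α.Homotopic β := by
  have harg : Continuous fun t => Complex.arg ((β t / α t : Circle) : ℂ) :=
    continuous_iff_continuousAt.2 fun t =>
      ContinuousAt.comp (f := fun t => ((β t / α t : Circle) : ℂ))
        (Complex.continuousAt_arg (Circle.div_mem_slitPlane ((dist_comm _ _).trans_lt (h t))))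
        (continuous_subtype_val.comp (β.continuous.div' α.continuous)).continuousAt
  refine ⟨{ toFun q := α q.2 * Circle.exp (q.1 * Complex.arg ((β q.2 / α q.2 : Circle) : ℂ))
            continuous_toFun := (α.continuous.comp continuous_snd).mul (Circle.exp.continuous.comp
              ((continuous_subtype_val.comp continuous_fst).mul (harg.comp continuous_snd)))
            map_zero_left := by simp
            map_one_left := fun t => by
              simp only [Set.Icc.coe_one, one_mul, Circle.exp_arg, mul_div_cancel]
              rfl
            prop' := fun s => ?_ }⟩
  rintro t (rfl | rfl) <;> simp

noncomputable def Circle.standardLoop : Path (1 : Circle) 1 where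
  toFun t := Circle.exp (2 * Real.pi * t)
  source' := by simp
  target' := by simp

theorem Circle.standardLoop_not_homotopic_refl : ¬ Circle.standardLoop.Homotopic (.refl 1) := by
  intro h
  have cov := Circle.isCoveringMap_exp
  have hlift := cov.liftPath_apply_one_eq_of_homotopicRel h 0 (by simp) (by simp)
  let lift : C(I, ℝ) := ⟨fun t => 2 * Real.pi * t, by fun_prop⟩
  rw [← (cov.eq_liftPath_iff' (e := 0) (Γ := lift) _).2 ⟨rfl, by simp [lift]⟩,
    ← (cov.eq_liftPath_iff' (e := 0) (Γ := .const I 0) _).2 ⟨by ext; simp, rfl⟩] at hlift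
  simp [lift, Real.pi_ne_zero] at hlift

theorem Circle.pathComponent_path_mem_nhds {x y : Circle} (δ : Path x y) :
    pathComponent δ ∈ 𝓝 δ := by
  refine Filter.mem_of_superset ((continuous_induced_dom.tendsto δ).eventually
    (Metric.ball_mem_nhds (δ : C(I, Circle)) two_pos)) fun η hη => ?_
  exact Path.joined_iff_homotopic.2 <| Circle.path_homotopic_of_dist_lt_two fun t =>
    (ContinuousMap.dist_apply_le_dist t).trans_lt ((dist_comm _ _).trans_lt hη)

instance {x y : Circle} : DiscreteTopology (ZerothHomotopy (Path x y)) :=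
  discreteTopology_zerothHomotopy_of_pathComponent_mem_nhds Circle.pathComponent_path_mem_nhds

theorem not_semilocallySimplyConnectedAt_pi {ι : Type*} [Infinite ι] {X : ι → Type*}
    [∀ i, TopologicalSpace (X i)] (x : ∀ i, X i)
    (h : ∀ i, ∃ γ : Path (x i) (x i), ¬ γ.Homotopic (.refl (x i))) :
    ¬ SemilocallySimplyConnectedAt (∀ i, X i) x := by
  classical
  rintro ⟨U, hU, hxU, hU_loops⟩
  obtain ⟨S, V, hV, hSU⟩ := isOpen_pi_iff.1 hU x hxU
  obtain ⟨i, hi⟩ := S.exists_notMem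
  obtain ⟨γ, hγ⟩ := h i
  let Γ : Path x x := .pi (Function.update (fun j => .refl (x j)) i γ)
  have hΓU : ∀ t, Γ t ∈ U := fun t => hSU fun j hj => by
    simpa [Γ, Function.update_of_ne (ne_of_mem_of_not_mem hj hi)] using (hV j hj).2
  have hΓi : Γ.map (continuous_apply i) = γ := by ext t; simp [Γ]
  have hrefl : (Path.refl x).map (continuous_apply i) = .refl (x i) := rfl
  apply hγ
  simpa only [hΓi, hrefl] using (hU_loops Γ hΓU).map ⟨_, continuous_apply i⟩

/-- The infinite product of circles has totally disconnected topological fundamental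
group, yet is not semilocally simply connected at the basepoint. -/
theorem stmt12 :
    TotallyDisconnectedSpace (ZerothHomotopy (Path circleP circleP)) ∧
    ¬ SemilocallySimplyConnectedAt (∀ _ : ℕ, Circle) circleP :=
  ⟨totallyDisconnectedSpace_zerothHomotopy_path_pi,
    not_semilocallySimplyConnectedAt_pi circleP fun _ =>
      ⟨Circle.standardLoop, Circle.standardLoop_not_homotopic_refl⟩⟩
end

section
/- Let X be a metric space, f, g : [0,1] → X loops at p, and suppose there exist partitions 0 = t₀ < t₁ < ⋯ < t_k = 1 and paths βᵢ from f(tᵢ) to g(tᵢ) with β₀ and β_k constant, such that for each i the loop formed by f|[tᵢ,tᵢ₊₁], βᵢ₊₁, the reverse of g|[tᵢ,tᵢ₊₁], and the reverse of βᵢ is null-homotopic in X. Then f and g are homotopic rel endpoints in X. -/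
/-!
In the fundamental groupoid each null-homotopic rectangle boundary says that the square
`f|[tᵢ,tᵢ₊₁] ⬝ βᵢ₊₁ = βᵢ ⬝ g|[tᵢ,tᵢ₊₁]` commutes. Pasting the `k` squares gives
`f|[t₀,t_k] ⬝ β_k = β₀ ⬝ g|[t₀,t_k]`, because consecutive truncations of a path compose, up to
homotopy, to the truncation over the union of the intervals. Since `β₀` and `β_k` are constant
and `[t₀,t_k] = [0,1]`, this is `f ≃ g`.
-/

open unitInterval

namespace Path

variable {X : Type*} [TopologicalSpace X]

theorem Homotopic.of_forall_eq_comp {Y : Type*} [TopologicalSpace Y] [SimplyConnectedSpace Y]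
    (F : C(Y, X)) {y₀ y₁ : Y} (φ ψ : Path y₀ y₁) {x₀ x₁ : X} {p q : Path x₀ x₁}
    (hp : ∀ s, p s = F (φ s)) (hq : ∀ s, q s = F (ψ s)) : p.Homotopic q := by
  have hx₀ : x₀ = F y₀ := by rw [← p.source, hp, φ.source]
  have hx₁ : x₁ = F y₁ := by rw [← p.target, hp, φ.target]
  have hφ : p = (φ.map F.continuous).cast hx₀ hx₁ := by ext s; exact hp s
  have hψ : q = (ψ.map F.continuous).cast hx₀ hx₁ := by ext s; exact hq s
  rw [hφ, hψ]
  exact ((SimplyConnectedSpace.paths_homotopic φ ψ).map F).pathCast hx₀ hx₁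

def clampPath {t₀ t₁ : ℝ} (h₀ : 0 ≤ t₀) (h : t₀ ≤ t₁) (h₁ : t₁ ≤ 1) : Path t₀ t₁ where
  toFun s := min (max (s : ℝ) t₀) t₁
  continuous_toFun := by fun_prop
  source' := by simp [h₀, h]
  target' := by simp [h.trans h₁, h₁]

/-- Both sides are `γ.extend` composed with a path in the simply connected space `ℝ`. -/
theorem Homotopic.truncateOfLE_trans_truncateOfLE {a b : X} (γ : Path a b) {t₀ t₁ t₂ : ℝ}
    (h₀ : 0 ≤ t₀) (h₀₁ : t₀ ≤ t₁) (h₁₂ : t₁ ≤ t₂) (h₂ : t₂ ≤ 1) :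
    ((γ.truncateOfLE h₀₁).trans (γ.truncateOfLE h₁₂)).Homotopic
      (γ.truncateOfLE (h₀₁.trans h₁₂)) := by
  refine Homotopic.of_forall_eq_comp ⟨γ.extend, γ.continuous_extend⟩
    ((clampPath h₀ h₀₁ (h₁₂.trans h₂)).trans (clampPath (h₀.trans h₀₁) h₁₂ h₂))
    (clampPath h₀ (h₀₁.trans h₁₂) h₂) (fun s => ?_) (fun s => rfl)
  simp only [trans_apply]
  split_ifs <;> rfl

theorem truncateOfLE_self {a b : X} (γ : Path a b) (t : ℝ) :
    γ.truncateOfLE (le_refl t) = Path.refl (γ.extend t) := by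
  ext s
  simp [truncateOfLE, truncate]

theorem truncateOfLE_cast_eq_self {a b : X} (γ : Path a b) {t₀ t₁ : ℝ} (h : t₀ ≤ t₁)
    (h₀ : t₀ = 0) (h₁ : t₁ = 1) (ha : a = γ.extend t₀) (hb : b = γ.extend t₁) :
    (γ.truncateOfLE h).cast ha hb = γ := by
  subst h₀ h₁
  ext s
  simp [truncateOfLE, truncate, max_eq_left s.2.1, min_eq_left s.2.2]

theorem Homotopic.concat_truncateOfLE {a b : X} (γ : Path a b) {n : ℕ} (t : Fin (n + 1) → I)
    (ht : Monotone t) :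
    (concat (fun i => γ.extend (t i))
      (fun i => γ.truncateOfLE (ht Fin.castSucc_lt_succ.le : (t i.castSucc : ℝ) ≤ t i.succ))).Homotopic
      (γ.truncateOfLE (ht (Fin.zero_le (Fin.last n)) : (t 0 : ℝ) ≤ t (Fin.last n))) := by
  induction n with
  | zero => rw [concat_zero, truncateOfLE_self]
  | succ n ih =>
    rw [concat_succ]
    exact ((ih (t ∘ Fin.castSucc) (ht.comp Fin.strictMono_castSucc.monotone)).hcomp
      (refl _)).trans
      (Homotopic.truncateOfLE_trans_truncateOfLE γ (t 0).2.1 (ht (Fin.zero_le _))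
        (ht Fin.castSucc_lt_succ.le) (t _).2.2)

theorem Homotopic.commSq_of_boundary_homotopic_refl {a b c d : X} {u : Path a b}
    {v : Path b c} {w : Path d c} {x : Path a d}
    (h : (((u.trans v).trans w.symm).trans x.symm).Homotopic (Path.refl a)) :
    (u.trans v).Homotopic (x.trans w) := by
  rw [← Homotopic.Quotient.eq] at h ⊢
  simp only [Homotopic.Quotient.mk_trans, Homotopic.Quotient.mk_symm,
    Homotopic.Quotient.mk_refl] at h ⊢
  generalize Homotopic.Quotient.mk u = U, Homotopic.Quotient.mk v = V,
    Homotopic.Quotient.mk w = W, Homotopic.Quotient.mk x = Y at h ⊢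
  calc U.trans V = (((U.trans V).trans W.symm).trans Y.symm).trans (Y.trans W) := by
        simp only [Homotopic.Quotient.trans_assoc]
        rw [← Homotopic.Quotient.trans_assoc Y.symm, Homotopic.Quotient.symm_trans,
          Homotopic.Quotient.refl_trans, ← Homotopic.Quotient.trans_assoc,
          Homotopic.Quotient.symm_trans, Homotopic.Quotient.trans_refl]
    _ = Y.trans W := by rw [h, Homotopic.Quotient.refl_trans]

theorem Homotopic.concat_trans_of_commSq {n : ℕ} {x y : Fin (n + 1) → X}
    (u : ∀ i : Fin n, Path (x i.castSucc) (x i.succ))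
    (v : ∀ i : Fin n, Path (y i.castSucc) (y i.succ)) (β : ∀ i, Path (x i) (y i))
    (hsq : ∀ i, ((u i).trans (β i.succ)).Homotopic ((β i.castSucc).trans (v i))) :
    ((concat x u).trans (β (Fin.last n))).Homotopic ((β 0).trans (concat y v)) := by
  induction n with
  | zero =>
    rw [concat_zero, concat_zero]
    exact (refl_trans _).trans (trans_refl _).symm
  | succ n ih =>
    have ih' := ih (fun i => u i.castSucc) (fun i => v i.castSucc) (fun i => β i.castSucc)
      (fun i => hsq i.castSucc)
    rw [concat_succ, concat_succ]
    exact (trans_assoc _ _ _).trans <| ((refl _).hcomp (hsq (Fin.last n))).trans <|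
      (trans_assoc _ _ _).symm.trans <| (ih'.hcomp (refl _)).trans (trans_assoc _ _ _)

theorem Homotopic.cast_of_commSq_const {a b c d x y : X} {u : Path a b} {v : Path c d}
    {β₀ : Path a c} {β₁ : Path b d} (hβ₀ : ∀ s, β₀ s = x) (hβ₁ : ∀ s, β₁ s = y)
    (h : (u.trans β₁).Homotopic (β₀.trans v)) (ha : x = a) (hb : y = b) (hc : x = c)
    (hd : y = d) :
    (u.cast ha hb).Homotopic (v.cast hc hd) := by
  subst ha hb hc hd
  obtain rfl : β₀ = Path.refl x := by ext s; exact hβ₀ s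
  obtain rfl : β₁ = Path.refl y := by ext s; exact hβ₁ s
  simpa using (trans_refl u).symm.trans (h.trans (refl_trans v))

end Path

/-- The "filling in rectangles" lemma: if loops `f` and `g` at `p` admit a partition
`0 = t₀ < t₁ < ⋯ < t_k = 1` and connecting paths `βᵢ` from `f(tᵢ)` to `g(tᵢ)` with `β₀`
and `β_k` constant, such that each rectangle boundary loop
`f|[tᵢ,tᵢ₊₁] ⬝ βᵢ₊₁ ⬝ (g|[tᵢ,tᵢ₊₁])⁻¹ ⬝ βᵢ⁻¹` is null-homotopic, then `f ≃ g` rel endpoints. -/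
theorem stmt15 {X : Type*} [MetricSpace X] {p : X} (f g : Path p p)
    (k : ℕ) (t : Fin (k + 1) → unitInterval) (htmono : StrictMono t)
    (ht0 : t 0 = 0) (htk : t (Fin.last k) = 1)
    (β : ∀ i : Fin (k + 1), Path (f.extend (t i)) (g.extend (t i)))
    (hβ0 : ∀ s, β 0 s = p) (hβk : ∀ s, β (Fin.last k) s = p)
    (h : ∀ i : Fin k,
      haveI hle : ((t i.castSucc : ℝ)) ≤ ((t i.succ : ℝ)) := by
        exact_mod_cast (htmono (show i.castSucc < i.succ from Fin.castSucc_lt_succ)).le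
      ((((f.truncateOfLE hle).trans (β i.succ)).trans
            (g.truncateOfLE hle).symm).trans
          (β i.castSucc).symm).Homotopic
        (Path.refl (f.extend (t i.castSucc)))) :
    f.Homotopic g := by
  have pasted := Path.Homotopic.concat_trans_of_commSq _ _ β
    fun i => Path.Homotopic.commSq_of_boundary_homotopic_refl (h i)
  have hf := Path.Homotopic.concat_truncateOfLE f t htmono.monotone
  have hg := Path.Homotopic.concat_truncateOfLE g t htmono.monotone
  have outer := (hf.symm.hcomp (Path.Homotopic.refl _)).trans
    (pasted.trans ((Path.Homotopic.refl _).hcomp hg))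
  have ht0' : (t 0 : ℝ) = 0 := congrArg Subtype.val ht0
  have htk' : (t (Fin.last k) : ℝ) = 1 := congrArg Subtype.val htk
  have := outer.cast_of_commSq_const hβ0 hβk (by rw [ht0', f.extend_zero])
    (by rw [htk', f.extend_one]) (by rw [ht0', g.extend_zero]) (by rw [htk', g.extend_one])
  rwa [f.truncateOfLE_cast_eq_self _ ht0' htk', g.truncateOfLE_cast_eq_self _ ht0' htk'] at this
end
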